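/- arXiv:1707.09928 — 4 statements merged into one kernel-verified Lean document; each statement's English description precedes it below -/
import Mathlib

section
/- Let d ≥ 2 and let x = (x₁,...,x_d) be a probability vector (xᵢ ≥ 0, ∑xᵢ = 1) with fixed purity ∑xᵢ² = γ where 1/d ≤ γ ≤ 1. Then the Shannon entropy H(x) = -∑ xᵢ log xᵢ is maximized by the vector with x₁ = 1/d + √((d-1)/d · (γ - 1/d)) and x₂ = ... = x_d = (1 - x₁)/(d-1). -/
/-!
Let `a` be the claimed largest coordinate and `b = (1 - a) / (d - 1)` the others. By
Cauchy–Schwarz no coordinate of a probability vector of purity `γ` exceeds `a`. The quadratic `q`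
tangent to `f t = -t log t` at `b` and meeting `f` again at `a` dominates `f` on `[0, a]`: the
derivative of `q - f` is concave and vanishes at `b`, and by Rolle at some `c ∈ (b, a)`, so `q - f`
decreases, increases, decreases on `[0, b]`, `[b, c]`, `[c, a]` and is minimal at `b` or `a`, where
it vanishes. As `∑ q(xᵢ)` only depends on `∑ xᵢ` and `∑ xᵢ²`, we get
`H(x) ≤ ∑ q(xᵢ) = ∑ q(yᵢ) = H(y)`, the last step because `y` only takes the values `a` and `b`.
For `γ = 1` (where `b = 0`) both entropies vanish.
-/

/-- Shannon entropy of a vector, with the convention `0 * log 0 = 0`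
(automatic since `Real.log 0 = 0`). -/
noncomputable def shannonEntropy {d : ℕ} (x : Fin d → ℝ) : ℝ :=
  -∑ i, x i * Real.log (x i)

open Real Set Finset

section ConcaveSign

variable {s : Set ℝ} {f : ℝ → ℝ} {b c u : ℝ}

theorem ConcaveOn.nonpos_of_le_or_le_of_eq_zero (hf : ConcaveOn ℝ s f) (hb : b ∈ s)
    (hc : c ∈ s) (hu : u ∈ s) (hbc : b < c) (hfb : f b = 0) (hfc : f c = 0)
    (hbcu : u ≤ b ∨ c ≤ u) : f u ≤ 0 := by
  rcases hbcu with hub | hcu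
  · obtain rfl | hub := hub.eq_or_lt
    · exact hfb.le
    have := hf.slope_anti_adjacent hu hc hub hbc
    rw [hfb, hfc, sub_zero, zero_div, zero_sub, neg_div, neg_nonneg] at this
    simpa using (div_le_iff₀ (sub_pos.2 hub)).mp this
  · obtain rfl | hcu := hcu.eq_or_lt
    · exact hfc.le
    have := hf.slope_anti_adjacent hb hu hbc hcu
    rw [hfb, hfc, sub_self, zero_div] at this
    simpa using (div_le_iff₀ (sub_pos.2 hcu)).mp this

theorem ConcaveOn.nonneg_of_mem_Icc_of_eq_zero (hf : ConcaveOn ℝ s f) (hb : b ∈ s) (hc : c ∈ s)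
    (hfb : f b = 0) (hfc : f c = 0) (hu : u ∈ Icc b c) : 0 ≤ f u := by
  simpa [hfb, hfc] using hf.ge_on_segment hb hc (segment_eq_Icc (hu.1.trans hu.2) ▸ hu)

end ConcaveSign

theorem nonneg_of_concaveOn_deriv {Q Q' : ℝ → ℝ} {l a b : ℝ} (hlb : l < b) (hba : b < a)
    (hQc : ContinuousOn Q (Icc l a)) (hQ : ∀ u ∈ Ioo l a, HasDerivAt Q (Q' u) u)
    (hQ' : ConcaveOn ℝ (Ioo l a) Q') (hQb : Q b = 0) (hQ'b : Q' b = 0) (hQa : Q a = 0)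
    {t : ℝ} (ht : t ∈ Icc l a) : 0 ≤ Q t := by
  obtain ⟨c, ⟨hbc, hca⟩, hQ'c⟩ := exists_hasDerivAt_eq_zero hba
    (hQc.mono (Icc_subset_Icc_left hlb.le)) (hQb.trans hQa.symm)
    fun u hu => hQ u ⟨hlb.trans hu.1, hu.2⟩
  have hb : b ∈ Ioo l a := ⟨hlb, hba⟩
  have hc : c ∈ Ioo l a := ⟨hlb.trans hbc, hca⟩
  have hcont {p q : ℝ} (hp : l ≤ p) (hq : q ≤ a) : ContinuousOn Q (Icc p q) :=
    hQc.mono (Icc_subset_Icc hp hq)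
  have hderiv {p q : ℝ} (hp : l ≤ p) (hq : q ≤ a) :
      ∀ u ∈ interior (Icc p q), HasDerivWithinAt Q (Q' u) (interior (Icc p q)) u := by
    intro u hu
    rw [interior_Icc] at hu
    exact (hQ u ⟨hp.trans_lt hu.1, hu.2.trans_le hq⟩).hasDerivWithinAt
  have hmem {p q : ℝ} (hp : l ≤ p) (hq : q ≤ a) {u : ℝ} (hu : u ∈ interior (Icc p q)) :
      u ∈ Ioo l a := by
    rw [interior_Icc] at hu
    exact ⟨hp.trans_lt hu.1, hu.2.trans_le hq⟩
  rcases le_total t b with htb | hbt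
  · have := antitoneOn_of_hasDerivWithinAt_nonpos (convex_Icc l b) (hcont le_rfl hba.le)
      (hderiv le_rfl hba.le) fun u hu => hQ'.nonpos_of_le_or_le_of_eq_zero hb hc
        (hmem le_rfl hba.le hu) hbc hQ'b hQ'c (Or.inl (interior_subset hu).2)
    simpa [hQb] using this ⟨ht.1, htb⟩ ⟨hlb.le, le_rfl⟩ htb
  rcases le_total t c with htc | hct
  · have := monotoneOn_of_hasDerivWithinAt_nonneg (convex_Icc b c) (hcont hlb.le hca.le)
      (hderiv hlb.le hca.le) fun u hu =>
        hQ'.nonneg_of_mem_Icc_of_eq_zero hb hc hQ'b hQ'c (interior_subset hu)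
    simpa [hQb] using this ⟨le_rfl, hbc.le⟩ ⟨hbt, htc⟩ hbt
  · have := antitoneOn_of_hasDerivWithinAt_nonpos (convex_Icc c a) (hcont hc.1.le le_rfl)
      (hderiv hc.1.le le_rfl) fun u hu => hQ'.nonpos_of_le_or_le_of_eq_zero hb hc
        (hmem hc.1.le le_rfl hu) hbc hQ'b hQ'c (Or.inr (interior_subset hu).1)
    simpa [hQa] using this ⟨hct, ht.2⟩ ⟨hca.le, le_rfl⟩ ht.2

/-- The quadratic in `t` tangent to `negMulLog` at `b` and meeting it again at `a`; for `a = b`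
the junk value `0 / 0 = 0` makes it the tangent line. -/
noncomputable def negMulLogQuadratic (a b t : ℝ) : ℝ :=
  negMulLog b - (log b + 1) * (t - b) -
    (negMulLog b - (log b + 1) * (a - b) - negMulLog a) / (a - b) ^ 2 * (t - b) ^ 2

theorem negMulLogQuadratic_right (a b : ℝ) : negMulLogQuadratic a b b = negMulLog b := by
  simp [negMulLogQuadratic]

theorem negMulLogQuadratic_left (a b : ℝ) : negMulLogQuadratic a b a = negMulLog a := by
  obtain rfl | hab := eq_or_ne a b
  · exact negMulLogQuadratic_right a a
  rw [negMulLogQuadratic, div_mul_cancel₀ _ (pow_ne_zero 2 (sub_ne_zero.2 hab))]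
  ring

theorem negMulLog_le_tangent {b t : ℝ} (hb : 0 < b) (ht : 0 ≤ t) :
    negMulLog t ≤ negMulLog b - (log b + 1) * (t - b) := by
  have h := negMulLog_le_one_sub_self (div_nonneg ht hb.le)
  have e := negMulLog_mul b (t / b)
  rw [mul_div_cancel₀ t hb.ne'] at e
  rw [e, show negMulLog b = -b * log b from rfl]
  have := mul_le_mul_of_nonneg_left h hb.le
  rw [mul_sub, mul_one, mul_div_cancel₀ _ hb.ne'] at this
  field_simp
  linarith

theorem negMulLog_le_negMulLogQuadratic {a b t : ℝ} (hb : 0 < b) (hba : b ≤ a)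
    (ht : t ∈ Icc 0 a) : negMulLog t ≤ negMulLogQuadratic a b t := by
  obtain rfl | hba := hba.eq_or_lt
  · simpa [negMulLogQuadratic] using negMulLog_le_tangent hb ht.1
  set C := (negMulLog b - (log b + 1) * (a - b) - negMulLog a) / (a - b) ^ 2
  have hQ : ∀ u ∈ Ioo 0 a, HasDerivAt (fun t => negMulLogQuadratic a b t - negMulLog t)
      (log u - log b - 2 * C * (u - b)) u := by
    intro u hu
    have hsq := ((hasDerivAt_id u).sub_const b).pow 2
    have := (((hasDerivAt_id u).sub_const b).const_mul (log b + 1)).const_sub (negMulLog b)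
      |>.sub (hsq.const_mul C) |>.sub (hasDerivAt_negMulLog hu.1.ne')
    refine this.congr_deriv ?_
    simp only [id, mul_one, Nat.cast_ofNat]
    ring
  have hQ' : ConcaveOn ℝ (Ioo 0 a) fun u => log u - log b - 2 * C * (u - b) := by
    refine ⟨convex_Ioo 0 a, fun x hx y hy p q hp hq hpq => ?_⟩
    have := strictConcaveOn_log_Ioi.concaveOn.2 hx.1 hy.1 hp hq hpq
    simp only [smul_eq_mul] at this ⊢
    linear_combination this + (2 * C * b - log b) * hpq
  have := nonneg_of_concaveOn_deriv hb hba (by unfold negMulLogQuadratic; fun_prop) hQ hQ'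
    (by simp [negMulLogQuadratic_right]) (by simp) (by simp [negMulLogQuadratic_left]) ht
  simpa using this

theorem sum_quadratic_eq_of_moments_eq {ι : Type*} [Fintype ι] {x y : ι → ℝ}
    (h1 : ∑ i, x i = ∑ i, y i) (h2 : ∑ i, x i ^ 2 = ∑ i, y i ^ 2) (α β κ : ℝ) :
    ∑ i, (α + β * x i + κ * x i ^ 2) = ∑ i, (α + β * y i + κ * y i ^ 2) := by
  simp only [sum_add_distrib, ← mul_sum, h1, h2]

theorem sum_apply_ite_eq {ι : Type*} [Fintype ι] [DecidableEq ι] (F : ℝ → ℝ) (i₀ : ι)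
    (u v : ℝ) : ∑ i, F (if i = i₀ then u else v) = F u + (Fintype.card ι - 1) * F v := by
  rw [← add_sum_erase _ _ (mem_univ i₀), if_pos rfl,
    sum_congr rfl fun i hi => by rw [if_neg (ne_of_mem_erase hi)], sum_const,
    nsmul_eq_mul, cast_card_erase_of_mem (mem_univ i₀), card_univ]

theorem sq_one_sub_le_of_sum_eq_one {ι : Type*} [Fintype ι] {x : ι → ℝ}
    (h1 : ∑ j, x j = 1) (i : ι) :
    (1 - x i) ^ 2 ≤ (Fintype.card ι - 1) * (∑ j, x j ^ 2 - x i ^ 2) := by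
  classical
  have := sq_sum_le_card_mul_sum_sq (s := univ.erase i) (f := x)
  rwa [sum_erase_eq_sub (mem_univ i), sum_erase_eq_sub (mem_univ i), h1,
    cast_card_erase_of_mem (mem_univ i), card_univ] at this


noncomputable def purityPeak (d : ℕ) (γ : ℝ) : ℝ :=
  1 / d + √((d - 1) / d * (γ - 1 / d))

noncomputable def purityBase (d : ℕ) (γ : ℝ) : ℝ :=
  (1 - purityPeak d γ) / (d - 1)

noncomputable def purityPeakVector (d : ℕ) (γ : ℝ) (i₀ : Fin d) : Fin d → ℝ :=
  fun i => if i = i₀ then purityPeak d γ else purityBase d γ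

section PurityPeak

variable {d : ℕ} {γ : ℝ}

theorem one_div_le_purityPeak : 1 / (d : ℝ) ≤ purityPeak d γ :=
  le_add_of_nonneg_right (Real.sqrt_nonneg _)

theorem le_purityPeak {ι : Type*} [Fintype ι] {x : ι → ℝ} (h1 : ∑ i, x i = 1)
    (h2 : ∑ i, x i ^ 2 = γ) (i : ι) : x i ≤ purityPeak (Fintype.card ι) γ := by
  have hd : (0 : ℝ) < Fintype.card ι := by exact_mod_cast Fintype.card_pos_iff.2 ⟨i⟩
  have hcs := sq_one_sub_le_of_sum_eq_one h1 i
  rw [h2] at hcs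
  have : (x i - 1 / Fintype.card ι) ^ 2 ≤
      (Fintype.card ι - 1) / Fintype.card ι * (γ - 1 / Fintype.card ι) := by
    field_simp
    nlinarith
  have := (le_abs_self _).trans (Real.abs_le_sqrt this)
  rw [purityPeak]
  linarith

theorem purityPeak_le_one (hd : 1 ≤ d) (hγ : γ ≤ 1) : purityPeak d γ ≤ 1 := by
  have hd : (1 : ℝ) ≤ d := by exact_mod_cast hd
  have hfrac : ((d : ℝ) - 1) / d = 1 - 1 / d := by field_simp
  have h0 : 0 ≤ 1 - 1 / (d : ℝ) := by rw [← hfrac]; exact div_nonneg (by linarith) (by linarith)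
  have : √((1 - 1 / (d : ℝ)) * (γ - 1 / d)) ≤ 1 - 1 / d :=
    Real.sqrt_le_iff.2 ⟨h0, by rw [sq]; exact mul_le_mul_of_nonneg_left (by linarith) h0⟩
  rw [purityPeak, hfrac]
  linarith

theorem purityPeak_lt_one (hd : 1 < d) (hγ : γ < 1) : purityPeak d γ < 1 := by
  have hd : (1 : ℝ) < d := by exact_mod_cast hd
  have hfrac : ((d : ℝ) - 1) / d = 1 - 1 / d := by field_simp
  have h0 : 0 < 1 - 1 / (d : ℝ) := by rw [← hfrac]; exact div_pos (by linarith) (by linarith)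
  have : √((1 - 1 / (d : ℝ)) * (γ - 1 / d)) < 1 - 1 / d :=
    (Real.sqrt_lt' h0).2 (by rw [sq]; exact mul_lt_mul_of_pos_left (by linarith) h0)
  rw [purityPeak, hfrac]
  linarith

theorem purityBase_nonneg (hd : 1 < d) (hγ : γ ≤ 1) : 0 ≤ purityBase d γ :=
  div_nonneg (sub_nonneg.2 (purityPeak_le_one hd.le hγ)) (sub_nonneg.2 (by exact_mod_cast hd.le))

theorem purityBase_pos (hd : 1 < d) (hγ : γ < 1) : 0 < purityBase d γ :=
  div_pos (sub_pos.2 (purityPeak_lt_one hd hγ)) (sub_pos.2 (by exact_mod_cast hd))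

theorem purityBase_le_purityPeak (hd : 1 < d) : purityBase d γ ≤ purityPeak d γ := by
  have hd : (1 : ℝ) < d := by exact_mod_cast hd
  have : 1 / (d : ℝ) ≤ purityPeak d γ := one_div_le_purityPeak
  rw [div_le_iff₀ (by linarith)] at this
  rw [purityBase, div_le_iff₀ (by linarith)]
  nlinarith

theorem purityPeak_add_mul_purityBase (hd : 1 < d) :
    purityPeak d γ + (d - 1) * purityBase d γ = 1 := by
  have hd : (d : ℝ) - 1 ≠ 0 := sub_ne_zero.2 (by exact_mod_cast hd.ne')
  rw [purityBase, mul_div_cancel₀ _ hd]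
  ring

theorem purityPeak_sq_add_mul_purityBase_sq (hd : 1 < d) (hγ : 1 / (d : ℝ) ≤ γ) :
    purityPeak d γ ^ 2 + (d - 1) * purityBase d γ ^ 2 = γ := by
  have hd : (1 : ℝ) < d := by exact_mod_cast hd
  have hs := Real.sq_sqrt
    (mul_nonneg (div_nonneg (by linarith) (by linarith) : 0 ≤ ((d : ℝ) - 1) / d) (sub_nonneg.2 hγ))
  rw [purityBase, purityPeak]
  set s := √(((d : ℝ) - 1) / d * (γ - 1 / d))
  have : (d : ℝ) - 1 ≠ 0 := by linarith
  field_simp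
  field_simp at hs
  linear_combination (d : ℝ) * hs

theorem purityPeakVector_nonneg (hd : 1 < d) (hγ : γ ≤ 1) (i₀ i : Fin d) :
    0 ≤ purityPeakVector d γ i₀ i := by
  unfold purityPeakVector
  split_ifs
  exacts [(purityBase_nonneg hd hγ).trans (purityBase_le_purityPeak hd), purityBase_nonneg hd hγ]

theorem sum_purityPeakVector (hd : 1 < d) (i₀ : Fin d) : ∑ i, purityPeakVector d γ i₀ i = 1 := by
  have := sum_apply_ite_eq id i₀ (purityPeak d γ) (purityBase d γ)
  rwa [Fintype.card_fin, id, id, purityPeak_add_mul_purityBase hd] at this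

theorem sum_sq_purityPeakVector (hd : 1 < d) (hγ : 1 / (d : ℝ) ≤ γ) (i₀ : Fin d) :
    ∑ i, purityPeakVector d γ i₀ i ^ 2 = γ := by
  have := sum_apply_ite_eq (· ^ 2) i₀ (purityPeak d γ) (purityBase d γ)
  rwa [Fintype.card_fin, purityPeak_sq_add_mul_purityBase_sq hd hγ] at this

theorem purityPeakVector_eq_or (i₀ i : Fin d) :
    purityPeakVector d γ i₀ i = purityPeak d γ ∨ purityPeakVector d γ i₀ i = purityBase d γ := by
  unfold purityPeakVector
  split_ifs
  exacts [Or.inl rfl, Or.inr rfl]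

end PurityPeak

theorem shannonEntropy_eq_sum_negMulLog {d : ℕ} (x : Fin d → ℝ) :
    shannonEntropy x = ∑ i, negMulLog (x i) := by
  simp [shannonEntropy, negMulLog]

theorem shannonEntropy_eq_zero_of_sum_sq_eq_one {d : ℕ} {x : Fin d → ℝ} (h0 : ∀ i, 0 ≤ x i)
    (h1 : ∑ i, x i = 1) (h2 : ∑ i, x i ^ 2 = 1) : shannonEntropy x = 0 := by
  have hle (i : Fin d) : x i ≤ 1 := h1 ▸ single_le_sum (fun j _ => h0 j) (mem_univ i)
  have hsum : ∑ i, x i * (1 - x i) = 0 := by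
    simp only [mul_one_sub, sum_sub_distrib, h1, ← sq, h2, sub_self]
  have hzero :=
    (sum_eq_zero_iff_of_nonneg fun i _ => mul_nonneg (h0 i) (sub_nonneg.2 (hle i))).1 hsum
  refine neg_eq_zero.2 (sum_eq_zero fun i hi => ?_)
  rcases mul_eq_zero.1 (hzero i hi) with h | h
  · simp [h]
  · simp [show x i = 1 by linarith]

theorem shannonEntropy_le_of_moments_eq {d : ℕ} {a b : ℝ} {x y : Fin d → ℝ} (hb : 0 < b)
    (hba : b ≤ a) (hx : ∀ i, x i ∈ Icc 0 a) (hy : ∀ i, y i = a ∨ y i = b)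
    (h1 : ∑ i, x i = ∑ i, y i) (h2 : ∑ i, x i ^ 2 = ∑ i, y i ^ 2) :
    shannonEntropy x ≤ shannonEntropy y := by
  set C := (negMulLog b - (log b + 1) * (a - b) - negMulLog a) / (a - b) ^ 2
  have hq (t : ℝ) : negMulLogQuadratic a b t =
      (negMulLog b + (log b + 1) * b - C * b ^ 2) + (2 * C * b - (log b + 1)) * t + -C * t ^ 2 := by
    unfold negMulLogQuadratic; ring
  rw [shannonEntropy_eq_sum_negMulLog, shannonEntropy_eq_sum_negMulLog]
  calc ∑ i, negMulLog (x i)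
      ≤ ∑ i, negMulLogQuadratic a b (x i) :=
        sum_le_sum fun i _ => negMulLog_le_negMulLogQuadratic hb hba (hx i)
    _ = ∑ i, negMulLogQuadratic a b (y i) := by
        simp only [hq]; exact sum_quadratic_eq_of_moments_eq h1 h2 _ _ _
    _ = ∑ i, negMulLog (y i) := sum_congr rfl fun i _ => by
        rcases hy i with h | h
        · rw [h, negMulLogQuadratic_left]
        · rw [h, negMulLogQuadratic_right]

/-- Among d-dimensional probability vectors of purity γ, Shannon entropy is maximized
by the vector `(x₁, (1-x₁)/(d-1), …, (1-x₁)/(d-1))` with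
`x₁ = 1/d + √((d-1)/d (γ - 1/d))`. -/
theorem entropy_max_at_fixed_purity (d : ℕ) (hd : 2 ≤ d) (γ : ℝ)
    (hγ₁ : 1 / (d : ℝ) ≤ γ) (hγ₂ : γ ≤ 1) :
    let a : ℝ := 1 / d + Real.sqrt ((d - 1) / d * (γ - 1 / d))
    let y : Fin d → ℝ := fun i => if i = ⟨0, by omega⟩ then a else (1 - a) / (d - 1)
    ((∀ i, 0 ≤ y i) ∧ ∑ i, y i = 1 ∧ ∑ i, (y i) ^ 2 = γ) ∧
    ∀ x : Fin d → ℝ, (∀ i, 0 ≤ x i) → ∑ i, x i = 1 → ∑ i, (x i) ^ 2 = γ →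
      shannonEntropy x ≤ shannonEntropy y := by
  intro a y
  have hd1 : 1 < d := by omega
  have hy : (∀ i, 0 ≤ y i) ∧ ∑ i, y i = 1 ∧ ∑ i, y i ^ 2 = γ := ⟨purityPeakVector_nonneg hd1 hγ₂ _,
    sum_purityPeakVector hd1 _, sum_sq_purityPeakVector hd1 hγ₁ _⟩
  refine ⟨hy, fun x hx0 hx1 hx2 => ?_⟩
  obtain rfl | hγ := hγ₂.eq_or_lt
  · rw [shannonEntropy_eq_zero_of_sum_sq_eq_one hx0 hx1 hx2,
      shannonEntropy_eq_zero_of_sum_sq_eq_one hy.1 hy.2.1 hy.2.2]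
  have hx : ∀ i, x i ∈ Icc 0 a := fun i => ⟨hx0 i, (Fintype.card_fin d ▸ le_purityPeak hx1 hx2 i :)⟩
  exact shannonEntropy_le_of_moments_eq (purityBase_pos hd1 hγ) (purityBase_le_purityPeak hd1) hx
    (purityPeakVector_eq_or _) (hx1.trans hy.2.1.symm) (hx2.trans hy.2.2.symm)
end

section
/- Let x₁ ≥ x₂ ≥ x₃ ≥ 0 with x₁ + x₂ + x₃ = 1 and x₁² + x₂² + x₃² = γ for a fixed γ ∈ [1/3, 1]. Then the maximum of H(x) = -∑ᵢ xᵢ log xᵢ over such triples is attained when x₂ = x₃, i.e., at x₁ = 1/3 + √((2/3)(γ - 1/3)), x₂ = x₃ = (1 - x₁)/2. -/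
/-!
The constraints cut out a circle centred at `(1/3, 1/3, 1/3)`, and `x₁` parametrises its arc of
decreasing triples, which runs from `x₁ = x₂` to `x₂ = x₃`, the latter at
`x₁ = 1/3 + s` with `s = √((2/3)(γ - 1/3))`. Along this arc
`(x₂ - x₃) · dH/dx₁ = (x₁ - x₂)(log x₂ - log x₃) - (x₂ - x₃)(log x₁ - log x₂)`,
which is nonnegative by concavity of `log`, so the entropy increases towards `x₂ = x₃`.
-/

/-- Shannon entropy of a triple, with `0 * log 0 = 0` (automatic since `Real.log 0 = 0`). -/
noncomputable def H3 (x₁ x₂ x₃ : ℝ) : ℝ :=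
  -(x₁ * Real.log x₁) - x₂ * Real.log x₂ - x₃ * Real.log x₃

open Real Set

lemma log_slope_le {p q r : ℝ} (hr : 0 < r) (hrq : r < q) (hqp : q < p) :
    (q - r) * (log p - log q) ≤ (p - q) * (log q - log r) := by
  have h := strictConcaveOn_log_Ioi.concaveOn.slope_anti_adjacent
    (mem_Ioi.2 hr) (mem_Ioi.2 (hr.trans (hrq.trans hqp))) hrq hqp
  rwa [div_le_div_iff₀ (sub_pos.2 hqp) (sub_pos.2 hrq), mul_comm, mul_comm (log q - log r)] at h

section Arc

variable {s t : ℝ}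

/-- `(x₂ - x₃)²` for a triple with `x₁ = t` on the circle
`x₁ + x₂ + x₃ = 1`, `x₁² + x₂² + x₃² = 1/3 + (3/2) s²`. -/
noncomputable def gapSq (s t : ℝ) : ℝ := 3 * (s ^ 2 - (t - 1 / 3) ^ 2)

noncomputable def arcSecond (s t : ℝ) : ℝ := (1 - t + √(gapSq s t)) / 2

noncomputable def arcThird (s t : ℝ) : ℝ := (1 - t - √(gapSq s t)) / 2

noncomputable def arcEntropy (s t : ℝ) : ℝ := H3 t (arcSecond s t) (arcThird s t)

lemma arcSecond_sub_arcThird : arcSecond s t - arcThird s t = √(gapSq s t) := by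
  unfold arcSecond arcThird; ring

lemma gapSq_eq_sq_sub {x₁ x₂ x₃ : ℝ} (hsum : x₁ + x₂ + x₃ = 1)
    (hsq : x₁ ^ 2 + x₂ ^ 2 + x₃ ^ 2 = 1 / 3 + 3 / 2 * s ^ 2) : gapSq s x₁ = (x₂ - x₃) ^ 2 := by
  unfold gapSq; linear_combination (-2) * hsq + (x₂ + x₃ + 1 - x₁) * hsum

lemma arcSecond_eq_and_arcThird_eq {x₁ x₂ x₃ : ℝ} (h23 : x₃ ≤ x₂) (hsum : x₁ + x₂ + x₃ = 1)
    (hsq : x₁ ^ 2 + x₂ ^ 2 + x₃ ^ 2 = 1 / 3 + 3 / 2 * s ^ 2) :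
    arcSecond s x₁ = x₂ ∧ arcThird s x₁ = x₃ := by
  have hsqrt : √(gapSq s x₁) = x₂ - x₃ := by
    rw [gapSq_eq_sq_sub hsum hsq, sqrt_sq (sub_nonneg.2 h23)]
  constructor <;> [unfold arcSecond; unfold arcThird] <;> rw [hsqrt] <;> linarith

lemma mem_Icc_of_sum_eq_of_sq_sum_eq {x₁ x₂ x₃ : ℝ} (hs : 0 ≤ s) (h12 : x₂ ≤ x₁) (h23 : x₃ ≤ x₂)
    (hsum : x₁ + x₂ + x₃ = 1) (hsq : x₁ ^ 2 + x₂ ^ 2 + x₃ ^ 2 = 1 / 3 + 3 / 2 * s ^ 2) :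
    x₁ ∈ Icc (1 / 3 + s / 2) (1 / 3 + s) := by
  have hgap := gapSq_eq_sq_sub hsum hsq
  unfold gapSq at hgap
  constructor <;> nlinarith [sq_nonneg (x₂ - x₃)]

lemma arcEntropy_right : arcEntropy s (1 / 3 + s) =
    H3 (1 / 3 + s) ((1 - (1 / 3 + s)) / 2) ((1 - (1 / 3 + s)) / 2) := by
  have h : gapSq s (1 / 3 + s) = 0 := by unfold gapSq; ring
  simp only [arcEntropy, arcSecond, arcThird, h, sqrt_zero, add_zero, sub_zero]

lemma continuous_arcThird : Continuous (arcThird s) := by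
  unfold arcThird gapSq; fun_prop

lemma continuous_arcEntropy : Continuous (arcEntropy s) := by
  have hsecond : Continuous (arcSecond s) := by unfold arcSecond gapSq; fun_prop
  unfold arcEntropy H3
  exact (continuous_mul_log.neg.sub (continuous_mul_log.comp hsecond)).sub
    (continuous_mul_log.comp continuous_arcThird)

section Interior

variable (ht : t ∈ Ioo (1 / 3 + s / 2) (1 / 3 + s))
include ht

lemma gapSq_pos : 0 < gapSq s t := by
  obtain ⟨h₁, h₂⟩ := ht
  unfold gapSq; nlinarith

lemma arcThird_lt_arcSecond : arcThird s t < arcSecond s t := by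
  rw [← sub_pos, arcSecond_sub_arcThird]; exact sqrt_pos.2 (gapSq_pos ht)

lemma arcSecond_lt_self : arcSecond s t < t := by
  obtain ⟨h₁, h₂⟩ := ht
  have hsqrt : √(gapSq s t) < 3 * t - 1 := by
    rw [sqrt_lt' (by linarith)]; unfold gapSq; nlinarith
  unfold arcSecond; linarith

end Interior

lemma hasDerivAt_sqrt_gapSq (h : 0 < gapSq s t) :
    HasDerivAt (fun t => √(gapSq s t)) ((1 - 3 * t) / √(gapSq s t)) t := by
  have hgap : HasDerivAt (gapSq s) (2 - 6 * t) t := by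
    refine ((((hasDerivAt_id t).sub_const (1 / 3)).pow 2).const_sub (s ^ 2) |>.const_mul 3)
      |>.congr_deriv ?_
    simp only [id, Nat.cast_ofNat]; ring
  refine ((hasDerivAt_sqrt h.ne').comp t hgap).congr_deriv ?_
  field_simp; ring

lemma hasDerivAt_arcSecond (h : 0 < gapSq s t) :
    HasDerivAt (arcSecond s) (-(t - arcThird s t) / √(gapSq s t)) t := by
  refine (((hasDerivAt_id t).const_sub 1).add (hasDerivAt_sqrt_gapSq h)).div_const 2
    |>.congr_deriv ?_
  unfold arcThird; field_simp; ring

lemma hasDerivAt_arcThird (h : 0 < gapSq s t) :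
    HasDerivAt (arcThird s) ((t - arcSecond s t) / √(gapSq s t)) t := by
  refine (((hasDerivAt_id t).const_sub 1).sub (hasDerivAt_sqrt_gapSq h)).div_const 2
    |>.congr_deriv ?_
  unfold arcSecond; field_simp; ring

lemma hasDerivAt_arcEntropy (h : 0 < gapSq s t) (ht : t ≠ 0) (h₂ : arcSecond s t ≠ 0)
    (h₃ : arcThird s t ≠ 0) :
    HasDerivAt (arcEntropy s)
      (((t - arcSecond s t) * (log (arcSecond s t) - log (arcThird s t))
        - (arcSecond s t - arcThird s t) * (log t - log (arcSecond s t))) / √(gapSq s t)) t := by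
  refine (((hasDerivAt_mul_log ht).neg.sub
    ((hasDerivAt_mul_log h₂).comp t (hasDerivAt_arcSecond h))).sub
    ((hasDerivAt_mul_log h₃).comp t (hasDerivAt_arcThird h))).congr_deriv ?_
  field_simp
  rw [← arcSecond_sub_arcThird]
  ring

lemma arcThird_strictMonoOn : StrictMonoOn (arcThird s) (Icc (1 / 3 + s / 2) (1 / 3 + s)) := by
  refine strictMonoOn_of_hasDerivWithinAt_pos (convex_Icc _ _)
    (f' := fun t => (t - arcSecond s t) / √(gapSq s t)) continuous_arcThird.continuousOn
    (fun t ht => ?_) (fun t ht => ?_)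
  all_goals rw [interior_Icc] at ht
  · exact (hasDerivAt_arcThird (gapSq_pos ht)).hasDerivWithinAt
  · exact div_pos (sub_pos.2 (arcSecond_lt_self ht)) (sqrt_pos.2 (gapSq_pos ht))

lemma arcEntropy_monotoneOn {t₀ : ℝ} (ht₀ : 1 / 3 + s / 2 ≤ t₀) (hr₀ : 0 ≤ arcThird s t₀) :
    MonotoneOn (arcEntropy s) (Icc t₀ (1 / 3 + s)) := by
  refine monotoneOn_of_hasDerivWithinAt_nonneg (convex_Icc _ _) continuous_arcEntropy.continuousOn
    (f' := fun t => ((t - arcSecond s t) * (log (arcSecond s t) - log (arcThird s t))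
      - (arcSecond s t - arcThird s t) * (log t - log (arcSecond s t))) / √(gapSq s t))
    (fun t ht => ?_) (fun t ht => ?_)
  all_goals
    rw [interior_Icc] at ht
    have ht' : t ∈ Ioo (1 / 3 + s / 2) (1 / 3 + s) := ⟨ht₀.trans_lt ht.1, ht.2⟩
    have h₃ : 0 < arcThird s t := hr₀.trans_lt <|
      arcThird_strictMonoOn ⟨ht₀, (ht.1.trans ht.2).le⟩ ⟨ht'.1.le, ht'.2.le⟩ ht.1
    have h₂ := arcThird_lt_arcSecond ht'
    have h₁ := arcSecond_lt_self ht'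
  · exact (hasDerivAt_arcEntropy (gapSq_pos ht') (by linarith) (by linarith) h₃.ne')
      |>.hasDerivWithinAt
  · exact div_nonneg (sub_nonneg.2 (log_slope_le h₃ h₂ h₁)) (sqrt_nonneg _)

end Arc

/-- For decreasing triples of nonnegative reals with sum 1 and sum of squares γ ∈ [1/3, 1],
the Shannon entropy is maximized at `x₁ = 1/3 + √((2/3)(γ-1/3))`, `x₂ = x₃ = (1-x₁)/2`. -/
theorem entropy_max_triple (γ : ℝ) (hγ₁ : 1 / 3 ≤ γ) (hγ₂ : γ ≤ 1) :
    let a : ℝ := 1 / 3 + Real.sqrt (2 / 3 * (γ - 1 / 3))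
    (a ≥ (1 - a) / 2 ∧ (1 - a) / 2 ≥ 0 ∧ a + (1 - a) / 2 + (1 - a) / 2 = 1 ∧
      a ^ 2 + ((1 - a) / 2) ^ 2 + ((1 - a) / 2) ^ 2 = γ) ∧
    ∀ x₁ x₂ x₃ : ℝ, x₁ ≥ x₂ → x₂ ≥ x₃ → x₃ ≥ 0 →
      x₁ + x₂ + x₃ = 1 → x₁ ^ 2 + x₂ ^ 2 + x₃ ^ 2 = γ →
      H3 x₁ x₂ x₃ ≤ H3 a ((1 - a) / 2) ((1 - a) / 2) := by
  intro a
  obtain ⟨s, hs, hs0, hγ⟩ : ∃ s, a = 1 / 3 + s ∧ 0 ≤ s ∧ γ = 1 / 3 + 3 / 2 * s ^ 2 :=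
    ⟨_, rfl, sqrt_nonneg _, by rw [sq_sqrt (by linarith)]; ring⟩
  rw [hs]
  refine ⟨⟨by linarith, by nlinarith, by ring, by rw [hγ]; ring⟩, ?_⟩
  intro x₁ x₂ x₃ h12 h23 h3 hsum hsq
  rw [hγ] at hsq
  obtain ⟨hx₂, hx₃⟩ := arcSecond_eq_and_arcThird_eq h23 hsum hsq
  obtain ⟨hlo, hhi⟩ := mem_Icc_of_sum_eq_of_sq_sum_eq hs0 h12 h23 hsum hsq
  calc H3 x₁ x₂ x₃ = arcEntropy s x₁ := by rw [arcEntropy, hx₂, hx₃]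
    _ ≤ arcEntropy s (1 / 3 + s) :=
      arcEntropy_monotoneOn hlo (hx₃ ▸ h3) ⟨le_rfl, hhi⟩ ⟨hhi, le_rfl⟩ hhi
    _ = _ := arcEntropy_right
end

section
/- Let x₁ ≥ x₂ ≥ x₃ ≥ 0 with x₁ + x₂ + x₃ = 1 and x₁² + x₂² + x₃² = γ, where 1/3 ≤ γ ≤ 1. Then the minimum of H(x) = -∑ᵢ xᵢ log xᵢ over such triples is attained either at a point with x₁ = x₂ or at a point with x₃ = 0. -/
open Real Set

theorem Real.mul_log_sub_log_le_mul_log_sub_log {w t u : ℝ} (hw : 0 < w) (hwt : w < t)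
    (htu : t < u) : (t - w) * (log u - log t) ≤ (u - t) * (log t - log w) := by
  have hslope := strictConcaveOn_log_Ioi.concaveOn.slope_anti_adjacent
    (mem_Ioi.2 hw) (mem_Ioi.2 (hw.trans (hwt.trans htu))) hwt htu
  rwa [div_le_div_iff₀ (sub_pos.2 htu) (sub_pos.2 hwt), mul_comm, mul_comm (_ - _) (u - t)]
    at hslope

theorem quadratic_neg_of_mem_Ioo {a b c lo hi t : ℝ} (ha : 0 < a)
    (hlo : a * lo ^ 2 + b * lo + c ≤ 0) (hhi : a * hi ^ 2 + b * hi + c ≤ 0)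
    (ht : t ∈ Ioo lo hi) : a * t ^ 2 + b * t + c < 0 := by
  obtain ⟨hlt, hth⟩ := ht
  have hchord : (hi - lo) * (a * t ^ 2 + b * t + c) =
      (hi - t) * (a * lo ^ 2 + b * lo + c) + (t - lo) * (a * hi ^ 2 + b * hi + c)
        - a * (hi - lo) * (hi - t) * (t - lo) := by ring
  have hlo' := mul_nonpos_of_nonneg_of_nonpos (sub_pos.2 hth).le hlo
  have hhi' := mul_nonpos_of_nonneg_of_nonpos (sub_pos.2 hlt).le hhi
  have hbend : 0 < a * (hi - lo) * (hi - t) * (t - lo) :=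
    mul_pos (mul_pos (mul_pos ha (sub_pos.2 (hlt.trans hth))) (sub_pos.2 hth)) (sub_pos.2 hlt)
  exact neg_of_mul_neg_right (by linarith) (sub_pos.2 (hlt.trans hth)).le

namespace EntropyTriple

structure Feasible (γ x₁ x₂ x₃ : ℝ) : Prop where
  le₁₂ : x₂ ≤ x₁
  le₂₃ : x₃ ≤ x₂
  nonneg₃ : 0 ≤ x₃
  sum_eq : x₁ + x₂ + x₃ = 1
  sum_sq_eq : x₁ ^ 2 + x₂ ^ 2 + x₃ ^ 2 = γ

noncomputable def gapSq (γ t : ℝ) : ℝ := 2 * γ - 1 + 2 * t - 3 * t ^ 2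

noncomputable def outer₁ (γ t : ℝ) : ℝ := (1 - t + √(gapSq γ t)) / 2

noncomputable def outer₃ (γ t : ℝ) : ℝ := (1 - t - √(gapSq γ t)) / 2

noncomputable def entropyOfMiddle (γ t : ℝ) : ℝ := H3 (outer₁ γ t) t (outer₃ γ t)

variable {γ x₁ x₂ x₃ : ℝ}

theorem gapSq_eq (hsum : x₁ + x₂ + x₃ = 1) (hsq : x₁ ^ 2 + x₂ ^ 2 + x₃ ^ 2 = γ) :
    gapSq γ x₂ = (x₁ - x₃) ^ 2 := by
  unfold gapSq; linear_combination (x₁ + x₃ + 1 - x₂) * hsum - 2 * hsq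

theorem order_quadratic_eq (hsum : x₁ + x₂ + x₃ = 1) (hsq : x₁ ^ 2 + x₂ ^ 2 + x₃ ^ 2 = γ) :
    6 * x₂ ^ 2 - 4 * x₂ + 1 - γ = -2 * ((x₁ - x₂) * (x₂ - x₃)) := by
  linear_combination (3 * x₂ - x₁ - x₃ - 1) * hsum + hsq

theorem last_quadratic_eq (hsum : x₁ + x₂ + x₃ = 1) (hsq : x₁ ^ 2 + x₂ ^ 2 + x₃ ^ 2 = γ) :
    2 * x₂ ^ 2 - 2 * x₂ + 1 - γ = 2 * (x₁ * x₃) := by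
  linear_combination (x₂ - x₁ - x₃ - 1) * hsum + hsq

theorem entropyOfMiddle_eq (hsum : x₁ + x₂ + x₃ = 1) (hsq : x₁ ^ 2 + x₂ ^ 2 + x₃ ^ 2 = γ)
    (h₃₁ : x₃ ≤ x₁) : entropyOfMiddle γ x₂ = H3 x₁ x₂ x₃ := by
  have hgap : √(gapSq γ x₂) = x₁ - x₃ := by
    rw [gapSq_eq hsum hsq, sqrt_sq (sub_nonneg.2 h₃₁)]
  have h₁ : outer₁ γ x₂ = x₁ := by simp only [outer₁, hgap]; linarith
  have h₃ : outer₃ γ x₂ = x₃ := by simp only [outer₃, hgap]; linarith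
  rw [entropyOfMiddle, h₁, h₃]

theorem outer_sum (γ t : ℝ) : outer₁ γ t + t + outer₃ γ t = 1 := by
  unfold outer₁ outer₃; ring

theorem outer_sum_sq {γ t : ℝ} (hD : 0 ≤ gapSq γ t) :
    outer₁ γ t ^ 2 + t ^ 2 + outer₃ γ t ^ 2 = γ := by
  have hs := sq_sqrt hD
  unfold outer₁ outer₃; unfold gapSq at hs ⊢; linear_combination hs / 2

theorem outer₁_sub_outer₃ (γ t : ℝ) : outer₁ γ t - outer₃ γ t = √(gapSq γ t) := by
  unfold outer₁ outer₃; ring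

theorem continuous_entropyOfMiddle (γ : ℝ) : Continuous (entropyOfMiddle γ) := by
  have hgap : Continuous fun t => √(gapSq γ t) := by unfold gapSq; fun_prop
  have h₁ : Continuous (outer₁ γ) := by unfold outer₁; fun_prop
  have h₃ : Continuous (outer₃ γ) := by unfold outer₃; fun_prop
  unfold entropyOfMiddle H3
  have := continuous_mul_log
  fun_prop

section Derivative

variable {γ t : ℝ}

theorem hasDerivAt_sqrt_gapSq (hD : 0 < gapSq γ t) :
    HasDerivAt (fun t => √(gapSq γ t)) ((1 - 3 * t) / √(gapSq γ t)) t := by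
  have hpoly : HasDerivAt (gapSq γ) (2 - 6 * t) t := by
    have h := (((hasDerivAt_id t).const_mul 2).sub ((hasDerivAt_pow 2 t).const_mul 3)).const_add
      (2 * γ - 1)
    have hfun : gapSq γ = fun x => 2 * γ - 1 + (2 * id x - 3 * x ^ 2) := by
      ext; simp only [gapSq, id]; ring
    rw [hfun]
    exact h.congr_deriv (by norm_num; ring)
  refine (hpoly.sqrt hD.ne').congr_deriv ?_
  field_simp
  ring

theorem hasDerivAt_outer₁ (hD : 0 < gapSq γ t) :
    HasDerivAt (outer₁ γ) ((outer₃ γ t - t) / √(gapSq γ t)) t := by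
  refine ((((hasDerivAt_id t).const_sub 1).add (hasDerivAt_sqrt_gapSq hD)).div_const 2
    |>.congr_deriv ?_)
  unfold outer₃; field_simp; ring

theorem hasDerivAt_outer₃ (hD : 0 < gapSq γ t) :
    HasDerivAt (outer₃ γ) ((t - outer₁ γ t) / √(gapSq γ t)) t := by
  refine ((((hasDerivAt_id t).const_sub 1).sub (hasDerivAt_sqrt_gapSq hD)).div_const 2
    |>.congr_deriv ?_)
  unfold outer₁; field_simp; ring

theorem hasDerivAt_entropyOfMiddle (hD : 0 < gapSq γ t) (ht : 0 < t) (hw : 0 < outer₃ γ t) :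
    HasDerivAt (entropyOfMiddle γ)
      (((t - outer₃ γ t) * (log (outer₁ γ t) - log t)
        - (outer₁ γ t - t) * (log t - log (outer₃ γ t))) / √(gapSq γ t)) t := by
  have hs := sqrt_pos.2 hD
  have hu : 0 < outer₁ γ t := by linarith [outer₁_sub_outer₃ γ t]
  have h₁ := (hasDerivAt_mul_log hu.ne').comp t (hasDerivAt_outer₁ hD)
  have h₂ := hasDerivAt_mul_log ht.ne'
  have h₃ := (hasDerivAt_mul_log hw.ne').comp t (hasDerivAt_outer₃ hD)
  refine ((h₁.neg.sub h₂).sub h₃).congr_deriv ?_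
  rw [← outer₁_sub_outer₃] at hs ⊢
  field_simp
  ring

theorem exists_hasDerivAt_entropyOfMiddle_nonpos (ht : 0 < t)
    (horder : 6 * t ^ 2 - 4 * t + 1 - γ < 0) (hlast : 0 < 2 * t ^ 2 - 2 * t + 1 - γ) :
    ∃ E, HasDerivAt (entropyOfMiddle γ) E t ∧ E ≤ 0 := by
  have hD : 0 < gapSq γ t := by unfold gapSq; nlinarith [sq_nonneg (3 * t - 1)]
  have hsum := outer_sum γ t
  have hsq := outer_sum_sq hD.le
  rw [order_quadratic_eq hsum hsq] at horder
  rw [last_quadratic_eq hsum hsq] at hlast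
  have hgap : 0 < outer₁ γ t - outer₃ γ t := outer₁_sub_outer₃ γ t ▸ sqrt_pos.2 hD
  obtain ⟨hut, hwt⟩ : 0 < outer₁ γ t - t ∧ 0 < t - outer₃ γ t := by
    have hprod : 0 < (outer₁ γ t - t) * (t - outer₃ γ t) := by linarith
    rcases pos_and_pos_or_neg_and_neg_of_mul_pos hprod with h | h
    · exact h
    · linarith [h.1, h.2]
  have hw : 0 < outer₃ γ t :=
    pos_of_mul_pos_right (a := outer₁ γ t) (by linarith) (by linarith)
  refine ⟨_, hasDerivAt_entropyOfMiddle hD ht hw, div_nonpos_of_nonpos_of_nonneg ?_ (sqrt_nonneg _)⟩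
  exact sub_nonpos.2 (mul_log_sub_log_le_mul_log_sub_log hw (by linarith) (by linarith))

end Derivative

namespace Feasible

variable {y₁ y₂ y₃ : ℝ}

theorem order_quadratic_nonpos (hx : Feasible γ x₁ x₂ x₃) :
    6 * x₂ ^ 2 - 4 * x₂ + 1 - γ ≤ 0 := by
  rw [order_quadratic_eq hx.sum_eq hx.sum_sq_eq]
  nlinarith [mul_nonneg (sub_nonneg.2 hx.le₁₂) (sub_nonneg.2 hx.le₂₃)]

theorem last_quadratic_nonneg (hx : Feasible γ x₁ x₂ x₃) :
    0 ≤ 2 * x₂ ^ 2 - 2 * x₂ + 1 - γ := by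
  rw [last_quadratic_eq hx.sum_eq hx.sum_sq_eq]
  exact mul_nonneg zero_le_two
    (mul_nonneg (hx.nonneg₃.trans (hx.le₂₃.trans hx.le₁₂)) hx.nonneg₃)

theorem middle_le_half (hx : Feasible γ x₁ x₂ x₃) : x₂ ≤ 1 / 2 := by
  linarith [hx.le₁₂, hx.nonneg₃, hx.sum_eq]

theorem H3_le_of_middle_le (hx : Feasible γ x₁ x₂ x₃) (hy : Feasible γ y₁ y₂ y₃)
    (h : x₂ ≤ y₂) : H3 y₁ y₂ y₃ ≤ H3 x₁ x₂ x₃ := by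
  -- `6t² - 4t + 1 - γ ≤ 0` and `0 ≤ 2t² - 2t + 1 - γ` say `x₃ ≤ t ≤ x₁` and `0 ≤ x₃`; the first
  -- quadratic is convex and the second decreasing on `t ≤ 1/2`, so between two feasible middle
  -- coordinates both hold strictly.
  have hderiv : ∀ t ∈ Ioo x₂ y₂, ∃ E, HasDerivAt (entropyOfMiddle γ) E t ∧ E ≤ 0 := by
    intro t ht
    refine exists_hasDerivAt_entropyOfMiddle_nonpos
      ((hx.nonneg₃.trans hx.le₂₃).trans_lt ht.1) ?_ ?_
    · have := quadratic_neg_of_mem_Ioo (b := -4) (c := 1 - γ) (by norm_num : (0 : ℝ) < 6)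
        (by linarith [hx.order_quadratic_nonpos]) (by linarith [hy.order_quadratic_nonpos]) ht
      linarith
    · have hsum : t + y₂ < 1 := by linarith [ht.2, hy.middle_le_half]
      nlinarith [mul_pos (sub_pos.2 ht.2) (sub_pos.2 hsum), hy.last_quadratic_nonneg]
  have hanti : AntitoneOn (entropyOfMiddle γ) (Icc x₂ y₂) := by
    refine antitoneOn_of_deriv_nonpos (convex_Icc _ _)
      (continuous_entropyOfMiddle γ).continuousOn (fun t ht => ?_) (fun t ht => ?_)
    all_goals rw [interior_Icc] at ht; obtain ⟨E, hE, hE₀⟩ := hderiv t ht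
    · exact hE.differentiableAt.differentiableWithinAt
    · rwa [hE.deriv]
  rw [← entropyOfMiddle_eq hx.sum_eq hx.sum_sq_eq (hx.le₂₃.trans hx.le₁₂),
    ← entropyOfMiddle_eq hy.sum_eq hy.sum_sq_eq (hy.le₂₃.trans hy.le₁₂)]
  exact hanti (left_mem_Icc.2 h) (right_mem_Icc.2 h) h

theorem middle_le_of_first_eq (hy : Feasible γ y₁ y₂ y₃) (hy₁₂ : y₁ = y₂)
    (hx : Feasible γ x₁ x₂ x₃) : x₂ ≤ y₂ := by
  have hy₀ : 6 * y₂ ^ 2 - 4 * y₂ + 1 - γ = 0 := by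
    rw [order_quadratic_eq hy.sum_eq hy.sum_sq_eq, hy₁₂]; ring
  have hy₂ : 1 / 3 ≤ y₂ := by linarith [hy.le₂₃, hy.sum_eq]
  by_contra! hlt
  nlinarith [mul_pos (sub_pos.2 hlt) (by linarith : 0 < 6 * (x₂ + y₂) - 4),
    hx.order_quadratic_nonpos]

theorem middle_le_of_last_eq_zero (hy : Feasible γ y₁ y₂ y₃) (hy₃ : y₃ = 0)
    (hx : Feasible γ x₁ x₂ x₃) : x₂ ≤ y₂ := by
  have hy₀ : 2 * y₂ ^ 2 - 2 * y₂ + 1 - γ = 0 := by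
    rw [last_quadratic_eq hy.sum_eq hy.sum_sq_eq, hy₃]; ring
  by_contra! hlt
  have hsum : y₂ + x₂ < 1 := by linarith [hx.middle_le_half]
  nlinarith [mul_pos (sub_pos.2 hlt) (sub_pos.2 hsum), hx.last_quadratic_nonneg]

end Feasible

theorem exists_feasible_first_eq (h₁ : 1 / 3 ≤ γ) (h₂ : γ ≤ 1 / 2) :
    ∃ a b, Feasible γ a a b := by
  have hs := sq_sqrt (by linarith : (0 : ℝ) ≤ 6 * γ - 2)
  have hs₁ : √(6 * γ - 2) ≤ 1 := sqrt_le_one.2 (by linarith)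
  have hs₀ := sqrt_nonneg (6 * γ - 2)
  exact ⟨(2 + √(6 * γ - 2)) / 6, (1 - √(6 * γ - 2)) / 3, le_rfl, by linarith, by linarith,
    by ring, by linear_combination hs / 6⟩

theorem exists_feasible_last_eq_zero (h₁ : 1 / 2 ≤ γ) (h₂ : γ ≤ 1) :
    ∃ a b, Feasible γ a b 0 := by
  have hr := sq_sqrt (by linarith : (0 : ℝ) ≤ 2 * γ - 1)
  have hr₁ : √(2 * γ - 1) ≤ 1 := sqrt_le_one.2 (by linarith)
  have hr₀ := sqrt_nonneg (2 * γ - 1)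
  exact ⟨(1 + √(2 * γ - 1)) / 2, (1 - √(2 * γ - 1)) / 2, by linarith, by linarith, le_rfl,
    by ring, by linear_combination hr / 2⟩

end EntropyTriple

open EntropyTriple in
/-- For decreasing triples of nonnegative reals with sum 1 and sum of squares γ ∈ [1/3, 1],
the minimum of the Shannon entropy is attained either at a point with `x₁ = x₂`,
or at a point with `x₃ = 0`. -/
theorem entropy_min_triple (γ : ℝ) (hγ₁ : 1 / 3 ≤ γ) (hγ₂ : γ ≤ 1) :
    ∃ y₁ y₂ y₃ : ℝ, y₁ ≥ y₂ ∧ y₂ ≥ y₃ ∧ y₃ ≥ 0 ∧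
      y₁ + y₂ + y₃ = 1 ∧ y₁ ^ 2 + y₂ ^ 2 + y₃ ^ 2 = γ ∧
      (y₁ = y₂ ∨ y₃ = 0) ∧
      ∀ x₁ x₂ x₃ : ℝ, x₁ ≥ x₂ → x₂ ≥ x₃ → x₃ ≥ 0 →
        x₁ + x₂ + x₃ = 1 → x₁ ^ 2 + x₂ ^ 2 + x₃ ^ 2 = γ →
        H3 y₁ y₂ y₃ ≤ H3 x₁ x₂ x₃ := by
  obtain ⟨y₁, y₂, y₃, hy, hshape⟩ : ∃ y₁ y₂ y₃, Feasible γ y₁ y₂ y₃ ∧ (y₁ = y₂ ∨ y₃ = 0) := by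
    rcases le_total γ (1 / 2) with h | h
    · obtain ⟨a, b, hab⟩ := exists_feasible_first_eq hγ₁ h
      exact ⟨a, a, b, hab, Or.inl rfl⟩
    · obtain ⟨a, b, hab⟩ := exists_feasible_last_eq_zero h hγ₂
      exact ⟨a, b, 0, hab, Or.inr rfl⟩
  refine ⟨y₁, y₂, y₃, hy.le₁₂, hy.le₂₃, hy.nonneg₃, hy.sum_eq, hy.sum_sq_eq, hshape,
    fun x₁ x₂ x₃ h₁₂ h₂₃ h₃ hsum hsq => ?_⟩
  have hx : Feasible γ x₁ x₂ x₃ := ⟨h₁₂, h₂₃, h₃, hsum, hsq⟩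
  refine hx.H3_le_of_middle_le hy ?_
  rcases hshape with h | h
  · exact hy.middle_le_of_first_eq h hx
  · exact hy.middle_le_of_last_eq_zero h hx
end

section
/- For any density matrix ρ on a d-dimensional Hilbert space with purity γ = Tr(ρ²), the von Neumann entropy satisfies S(ρ) ≤ -x₁ log x₁ - (1 - x₁) log((1-x₁)/(d-1)), where x₁ = 1/d + √((d-1)/d · (γ - 1/d)). -/
open scoped ComplexOrder

/-- Von Neumann entropy of a matrix: the Shannon entropy of its eigenvalue vector
(junk value 0 if the matrix is not Hermitian). -/
noncomputable def vonNeumannEntropy {n : Type*} [Fintype n] [DecidableEq n]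
    (A : Matrix n n ℂ) : ℝ :=
  if h : A.IsHermitian then -∑ i, h.eigenvalues i * Real.log (h.eigenvalues i) else 0

/-!
The eigenvalues of `ρ` form a probability vector `p` with `∑ pᵢ² = γ`, and `x₁` together with
`y = (1 - x₁) / (d - 1)` are the entries of the two-level vector `(x₁, y, …, y)` with the same
first two moments. If every `pᵢ` is below `x₁`, the quadratic that touches `t ↦ -t log t` at `y`
and meets it at `x₁` majorizes it on `[0, x₁]`; the sum of a quadratic over a vector depends only
on these moments, so the entropy of `p` is at most that of the two-level vector. If some
`pᵢ ≥ x₁`, concavity bounds the entropy by that of `(pᵢ, rest spread uniformly)`, and this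
decreases in `pᵢ` beyond `1/d`.
-/

open Real Set
open scoped Finset

theorem nonneg_of_hasDerivAt_of_concaveOn {f f' : ℝ → ℝ} {a y b : ℝ} (hay : a < y) (hyb : y < b)
    (hf : ContinuousOn f (Icc a b)) (hf' : ∀ t ∈ Ioo a b, HasDerivAt f (f' t) t)
    (hconc : ConcaveOn ℝ (Ioo a b) f') (hfy : f y = 0) (hf'y : f' y = 0) (hfb : f b = 0) :
    ∀ t ∈ Icc a b, 0 ≤ f t := by
  -- Rolle gives a second zero `ξ` of `f'`; by concavity `f'` is `≤ 0` on `(a, y)`,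
  -- `≥ 0` on `(y, ξ)` and `≤ 0` on `(ξ, b)`.
  obtain ⟨ξ, ⟨hyξ, hξb⟩, hf'ξ⟩ := exists_hasDerivAt_eq_zero hyb
    (hf.mono (Icc_subset_Icc hay.le le_rfl)) (hfy.trans hfb.symm)
    fun t ht ↦ hf' t ⟨hay.trans ht.1, ht.2⟩
  have hy : y ∈ Ioo a b := ⟨hay, hyb⟩
  have hξ : ξ ∈ Ioo a b := ⟨hay.trans hyξ, hξb⟩
  have deriv_within : ∀ u v, a ≤ u → v ≤ b →
      ∀ t ∈ interior (Icc u v), HasDerivWithinAt f (f' t) (interior (Icc u v)) t := by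
    intro u v hau hvb t ht
    rw [interior_Icc] at ht ⊢
    exact (hf' t ⟨hau.trans_lt ht.1, ht.2.trans_le hvb⟩).hasDerivWithinAt
  have cont : ∀ u v, a ≤ u → v ≤ b → ContinuousOn f (Icc u v) :=
    fun u v hau hvb ↦ hf.mono (Icc_subset_Icc hau hvb)
  have anti_left : AntitoneOn f (Icc a y) :=
    antitoneOn_of_hasDerivWithinAt_nonpos (convex_Icc a y) (cont a y le_rfl hyb.le)
      (deriv_within a y le_rfl hyb.le) fun t ht ↦ by
        rw [interior_Icc] at ht
        exact hf'y ▸ hconc.left_le_of_le_right'' ⟨ht.1, ht.2.trans hyb⟩ hξ ht.2.le hyξ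
          (by rw [hf'y, hf'ξ])
  have mono_mid : MonotoneOn f (Icc y ξ) :=
    monotoneOn_of_hasDerivWithinAt_nonneg (convex_Icc y ξ) (cont y ξ hay.le hξb.le)
      (deriv_within y ξ hay.le hξb.le) fun t ht ↦ by
        rw [interior_Icc] at ht
        simpa [hf'y, hf'ξ] using hconc.min_le_of_mem_Icc hy hξ ⟨ht.1.le, ht.2.le⟩
  have anti_right : AntitoneOn f (Icc ξ b) :=
    antitoneOn_of_hasDerivWithinAt_nonpos (convex_Icc ξ b) (cont ξ b (hay.trans hyξ).le le_rfl)
      (deriv_within ξ b (hay.trans hyξ).le le_rfl) fun t ht ↦ by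
        rw [interior_Icc] at ht
        exact hf'ξ ▸ hconc.right_le_of_le_left'' hy ⟨(hay.trans hyξ).trans ht.1, ht.2⟩ hyξ ht.1.le
          (by rw [hf'y, hf'ξ])
  intro t ⟨hat, htb⟩
  rcases le_total t y with hty | hyt
  · exact hfy ▸ anti_left ⟨hat, hty⟩ ⟨hay.le, le_rfl⟩ hty
  rcases le_total t ξ with htξ | hξt
  · exact hfy ▸ mono_mid ⟨le_rfl, hyξ.le⟩ ⟨hyt, htξ⟩ hyt
  · exact hfb ▸ anti_right ⟨hξt, htb⟩ ⟨hξb.le, le_rfl⟩ htb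

theorem exists_quadratic_majorant_negMulLog {x y : ℝ} (hy : 0 < y) (hyx : y < x) :
    ∃ a b c : ℝ, a + b * y + c * y ^ 2 = negMulLog y ∧ a + b * x + c * x ^ 2 = negMulLog x ∧
      ∀ t ∈ Icc 0 x, negMulLog t ≤ a + b * t + c * t ^ 2 := by
  set c := (negMulLog x - negMulLog y + (log y + 1) * (x - y)) / (x - y) ^ 2
  set b := -log y - 1 - 2 * c * y
  set a := negMulLog y - b * y - c * y ^ 2
  have hqx : a + b * x + c * x ^ 2 = negMulLog x := by
    have hc : c * (x - y) ^ 2 = negMulLog x - negMulLog y + (log y + 1) * (x - y) :=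
      div_mul_cancel₀ _ (by positivity)
    linear_combination hc
  have hconc : ConcaveOn ℝ (Ioo 0 x) fun t ↦ b + 1 + 2 * c * t + log t := by
    refine ((((2 * c) • LinearMap.id : ℝ →ₗ[ℝ] ℝ).concaveOn (convex_Ioo 0 x)).add_const
      (b + 1)).add (strictConcaveOn_log_Ioi.concaveOn.subset Ioo_subset_Ioi_self
      (convex_Ioo 0 x)) |>.congr fun t _ ↦ ?_
    simp only [Pi.add_apply, LinearMap.smul_apply, LinearMap.id_apply, smul_eq_mul]
    ring
  have hderiv : ∀ t ∈ Ioo 0 x, HasDerivAt (fun t ↦ a + b * t + c * t ^ 2 - negMulLog t)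
      (b + 1 + 2 * c * t + log t) t := by
    intro t ht
    have := ((((hasDerivAt_id' t).const_mul b).const_add a).fun_add
      ((hasDerivAt_pow 2 t).const_mul c)).fun_sub (hasDerivAt_negMulLog ht.1.ne')
    exact this.congr_deriv (by norm_num; ring)
  refine ⟨a, b, c, by ring, hqx, fun t ht ↦ ?_⟩
  simpa [sub_nonneg] using nonneg_of_hasDerivAt_of_concaveOn hy hyx (by fun_prop) hderiv hconc
    (by simp only [a]; ring) (by simp only [b]; ring) (sub_eq_zero.2 hqx) t ht

theorem ConcaveOn.sum_le_card_mul_map_sum_div_card {ι : Type*} {s : Set ℝ} {f : ℝ → ℝ}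
    (hf : ConcaveOn ℝ s f) {t : Finset ι} {p : ι → ℝ} (hp : ∀ i ∈ t, p i ∈ s) :
    ∑ i ∈ t, f (p i) ≤ #t * f ((∑ i ∈ t, p i) / #t) := by
  rcases t.eq_empty_or_nonempty with rfl | ht
  · simp
  have hcard : (0 : ℝ) < #t := by exact_mod_cast ht.card_pos
  have := hf.le_map_sum (w := fun _ ↦ (#t : ℝ)⁻¹) (fun _ _ ↦ by positivity)
    (by simp [hcard.ne']) hp
  simp only [smul_eq_mul, ← Finset.mul_sum] at this
  rwa [div_eq_inv_mul, ← inv_mul_le_iff₀ hcard]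

theorem ConcaveOn.antitoneOn_of_isMaxOn {s : Set ℝ} {f : ℝ → ℝ} {m : ℝ} (hf : ConcaveOn ℝ s f)
    (hm : m ∈ s) (hmax : IsMaxOn f s m) : AntitoneOn f (s ∩ Ici m) :=
  fun _ hu _ hv huv ↦ (le_min (hmax hv.1) le_rfl).trans (hf.min_le_of_mem_Icc hm hv.1 ⟨hu.2, huv⟩)

/-- The entropy of the vector with one entry `u` and `k` entries `(S - u) / k`. -/
noncomputable def twoLevelEntropy (k S u : ℝ) : ℝ := negMulLog u + k * negMulLog ((S - u) / k)

section TwoLevelEntropy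

variable {k S : ℝ}

theorem concaveOn_twoLevelEntropy (hk : 0 ≤ k) : ConcaveOn ℝ (Icc 0 S) (twoLevelEntropy k S) := by
  refine ⟨convex_Icc 0 S, fun u hu v hv a b ha hb hab ↦ ?_⟩
  have hrest : ∀ w ∈ Icc 0 S, (S - w) / k ∈ Ici 0 := fun w hw ↦ div_nonneg (sub_nonneg.2 hw.2) hk
  have h₁ := concaveOn_negMulLog.2 (mem_Ici.2 hu.1) (mem_Ici.2 hv.1) ha hb hab
  have h₂ := concaveOn_negMulLog.2 (hrest u hu) (hrest v hv) ha hb hab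
  have hmix : a • ((S - u) / k) + b • ((S - v) / k) = (S - (a • u + b • v)) / k := by
    simp only [smul_eq_mul]
    linear_combination (S / k) * hab
  rw [hmix] at h₂
  simp only [twoLevelEntropy, smul_eq_mul] at h₁ h₂ ⊢
  nlinarith [mul_le_mul_of_nonneg_left h₂ hk]

theorem isMaxOn_twoLevelEntropy (hk : 0 < k) :
    IsMaxOn (twoLevelEntropy k S) (Icc 0 S) (S / (k + 1)) := by
  intro u hu
  have hk1 : 0 < k + 1 := by linarith
  have hjensen := concaveOn_negMulLog.2 (mem_Ici.2 hu.1)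
    (mem_Ici.2 (div_nonneg (sub_nonneg.2 hu.2) hk.le)) (inv_nonneg.2 hk1.le)
    (div_nonneg hk.le hk1.le) (by field_simp; ring)
  have hmix : (k + 1)⁻¹ • u + (k / (k + 1)) • ((S - u) / k) = S / (k + 1) := by
    simp only [smul_eq_mul]
    field_simp
    ring
  have hrest : (S - S / (k + 1)) / k = S / (k + 1) := by
    field_simp
    ring
  rw [hmix, smul_eq_mul, smul_eq_mul] at hjensen
  calc twoLevelEntropy k S u
      = (k + 1) * ((k + 1)⁻¹ * negMulLog u + k / (k + 1) * negMulLog ((S - u) / k)) := by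
        rw [twoLevelEntropy]
        field_simp
    _ ≤ (k + 1) * negMulLog (S / (k + 1)) := by gcongr
    _ = twoLevelEntropy k S (S / (k + 1)) := by
        rw [twoLevelEntropy, hrest]
        ring

theorem antitoneOn_twoLevelEntropy (hk : 0 < k) (hS : 0 ≤ S) :
    AntitoneOn (twoLevelEntropy k S) (Icc (S / (k + 1)) S) := by
  have hm : S / (k + 1) ∈ Icc 0 S :=
    ⟨by positivity, div_le_self hS (by linarith)⟩
  refine ((concaveOn_twoLevelEntropy hk.le).antitoneOn_of_isMaxOn hm
    (isMaxOn_twoLevelEntropy hk)).mono fun u hu ↦ ⟨⟨hm.1.trans hu.1, hu.2⟩, hu.1⟩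

end TwoLevelEntropy

theorem twoLevel_moments_of_purity {D γ x : ℝ} (hD : 1 < D) (hγ_ge : 1 / D ≤ γ) (hγ_le : γ ≤ 1)
    (hx : x = 1 / D + √((D - 1) / D * (γ - 1 / D))) :
    0 ≤ (1 - x) / (D - 1) ∧ (1 - x) / (D - 1) ≤ x ∧ x + (D - 1) * ((1 - x) / (D - 1)) = 1 ∧
      γ = x ^ 2 + (D - 1) * ((1 - x) / (D - 1)) ^ 2 := by
  have hD1 : D - 1 ≠ 0 := by linarith
  set s := √((D - 1) / D * (γ - 1 / D)) with hs
  have hs_sq : D ^ 2 * s ^ 2 = (D - 1) * (D * γ - 1) := by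
    rw [hs, sq_sqrt (mul_nonneg (div_nonneg (by linarith) (by linarith)) (by linarith))]
    field_simp
  have hs_le : s ≤ (D - 1) / D := by
    rw [hs, sqrt_le_left (div_nonneg (by linarith) (by linarith)), sq]
    refine mul_le_mul_of_nonneg_left ?_ (div_nonneg (by linarith) (by linarith))
    rw [sub_div, div_self (by linarith)]
    linarith
  have hxy : x + (D - 1) * ((1 - x) / (D - 1)) = 1 := by
    field_simp
    ring
  refine ⟨div_nonneg ?_ (by linarith), ?_, hxy, ?_⟩
  · linarith [show 1 / D + (D - 1) / D = 1 by field_simp; ring]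
  · have hs0 : 0 ≤ s * D := mul_nonneg (sqrt_nonneg _) (by linarith)
    rw [div_le_iff₀ (by linarith), hx]
    linarith [show (1 / D + s) * (D - 1) = 1 - (1 / D + s) + s * D by field_simp; ring]
  · refine mul_left_cancel₀ hD1 ?_
    rw [show (D - 1) * (x ^ 2 + (D - 1) * ((1 - x) / (D - 1)) ^ 2)
      = (D - 1) * x ^ 2 + ((D - 1) * ((1 - x) / (D - 1))) ^ 2 by ring, mul_div_cancel₀ _ hD1, hx]
    field_simp
    linear_combination -D * hs_sq

section Simplex

variable {ι : Type*} [Fintype ι] {p : ι → ℝ}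

theorem sum_negMulLog_le_twoLevelEntropy (hp : ∀ i, 0 ≤ p i) (i : ι) :
    ∑ j, negMulLog (p j) ≤ twoLevelEntropy (Fintype.card ι - 1) (∑ j, p j) (p i) := by
  classical
  have hrest := concaveOn_negMulLog.sum_le_card_mul_map_sum_div_card
    (t := Finset.univ.erase i) fun j _ ↦ mem_Ici.2 (hp j)
  rw [Finset.card_erase_of_mem (Finset.mem_univ i), Finset.card_univ,
    Nat.cast_sub (Fintype.card_pos_iff.2 ⟨i⟩), Nat.cast_one,
    Finset.sum_erase_eq_sub (f := p) (Finset.mem_univ i)] at hrest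
  rw [← Finset.add_sum_erase _ _ (Finset.mem_univ i), twoLevelEntropy]
  gcongr

theorem sum_negMulLog_le_of_mem_Ico [Nonempty ι] {x y : ℝ} (hy : 0 ≤ y)
    (hp : ∀ i, p i ∈ Ico 0 x) (hsum : ∑ i, p i = x + (Fintype.card ι - 1) * y)
    (hsq : ∑ i, p i ^ 2 = x ^ 2 + (Fintype.card ι - 1) * y ^ 2) :
    ∑ i, negMulLog (p i) ≤ negMulLog x + (Fintype.card ι - 1) * negMulLog y := by
  set k : ℝ := Fintype.card ι - 1 with hk_def
  have hk : 0 ≤ k := by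
    rw [hk_def, sub_nonneg, Nat.one_le_cast]
    exact Fintype.card_pos
  have hx_pos : 0 < x := (hp (Classical.arbitrary ι)).1.trans_lt (hp _).2
  have hyx : y < x := by
    have := Finset.sum_lt_sum_of_nonempty Finset.univ_nonempty fun i (_ : i ∈ Finset.univ) ↦
      (hp i).2
    rw [hsum, Finset.sum_const, Finset.card_univ, nsmul_eq_mul] at this
    nlinarith
  have hy_pos : 0 < y := by
    obtain ⟨i, -, hi⟩ := Finset.exists_lt_of_sum_lt (f := 0) (g := p) (s := Finset.univ)
      (by rw [hsum]; simp; positivity)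
    have hpos : 0 < ∑ j, p j * (x - p j) :=
      Finset.sum_pos' (fun j _ ↦ mul_nonneg (hp j).1 (sub_nonneg.2 (hp j).2.le))
        ⟨i, Finset.mem_univ i, mul_pos hi (sub_pos.2 (hp i).2)⟩
    have hvar : ∑ j, p j * (x - p j) = k * y * (x - y) := by
      simp only [mul_sub, Finset.sum_sub_distrib, ← Finset.sum_mul, ← sq, hsum, hsq]
      ring
    by_contra! hy0
    rw [hvar, le_antisymm hy0 hy] at hpos
    simp at hpos
  obtain ⟨a, b, c, hqy, hqx, hq⟩ := exists_quadratic_majorant_negMulLog hy_pos hyx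
  calc ∑ i, negMulLog (p i)
      ≤ ∑ i, (a + b * p i + c * p i ^ 2) :=
        Finset.sum_le_sum fun i _ ↦ hq _ (Ico_subset_Icc_self (hp i))
    _ = Fintype.card ι * a + b * ∑ i, p i + c * ∑ i, p i ^ 2 := by
        simp only [Finset.sum_add_distrib, ← Finset.mul_sum, Finset.sum_const, Finset.card_univ,
          nsmul_eq_mul]
    _ = (a + b * x + c * x ^ 2) + k * (a + b * y + c * y ^ 2) := by
        rw [hsum, hsq]
        ring
    _ = negMulLog x + k * negMulLog y := by rw [hqx, hqy]

theorem sum_negMulLog_le_of_sum_sq [Nontrivial ι] (hp : ∀ i, 0 ≤ p i) {x y : ℝ} (hy : 0 ≤ y)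
    (hyx : y ≤ x) (hsum : ∑ i, p i = x + (Fintype.card ι - 1) * y)
    (hsq : ∑ i, p i ^ 2 = x ^ 2 + (Fintype.card ι - 1) * y ^ 2) :
    ∑ i, negMulLog (p i) ≤ negMulLog x + (Fintype.card ι - 1) * negMulLog y := by
  by_cases hlarge : ∃ i, x ≤ p i
  · obtain ⟨i, hxi⟩ := hlarge
    set k : ℝ := Fintype.card ι - 1 with hk_def
    have hk : 0 < k := by
      rw [hk_def, sub_pos, Nat.one_lt_cast]
      exact Fintype.one_lt_card
    have hpi : p i ≤ ∑ j, p j := Finset.single_le_sum (fun j _ ↦ hp j) (Finset.mem_univ i)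
    have hx_mem : x ∈ Icc ((∑ j, p j) / (k + 1)) (∑ j, p j) := by
      refine ⟨?_, hxi.trans hpi⟩
      rw [div_le_iff₀ (by linarith), hsum]
      nlinarith
    calc ∑ j, negMulLog (p j)
        ≤ twoLevelEntropy k (∑ j, p j) (p i) := sum_negMulLog_le_twoLevelEntropy hp i
      _ ≤ twoLevelEntropy k (∑ j, p j) x :=
          antitoneOn_twoLevelEntropy hk (Finset.sum_nonneg fun j _ ↦ hp j) hx_mem
            ⟨hx_mem.1.trans hxi, hpi⟩ hxi
      _ = negMulLog x + k * negMulLog y := by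
          rw [twoLevelEntropy, hsum, add_sub_cancel_left, mul_div_cancel_left₀ _ hk.ne']
  push Not at hlarge
  exact sum_negMulLog_le_of_mem_Ico hy (fun i ↦ ⟨hp i, hlarge i⟩) hsum hsq

theorem neg_sum_mul_log_le_of_purity [Nontrivial ι] (hp : ∀ i, 0 ≤ p i) (hsum : ∑ i, p i = 1)
    {γ : ℝ} (hsq : ∑ i, p i ^ 2 = γ) {x : ℝ} (hx : x = 1 / Fintype.card ι +
      √((Fintype.card ι - 1) / Fintype.card ι * (γ - 1 / Fintype.card ι))) :
    -∑ i, p i * log (p i) ≤ -(x * log x) - (1 - x) * log ((1 - x) / (Fintype.card ι - 1)) := by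
  set D : ℝ := (Fintype.card ι : ℝ)
  have hD : 1 < D := Nat.one_lt_cast.2 Fintype.one_lt_card
  have hγ_ge : 1 / D ≤ γ := by
    have := sq_sum_le_card_mul_sum_sq (s := Finset.univ) (f := p)
    rw [hsum, hsq, Finset.card_univ] at this
    rw [div_le_iff₀ (by linarith)]
    linarith
  have hγ_le : γ ≤ 1 := by
    simpa [hsum, hsq] using Finset.sum_sq_le_sq_sum_of_nonneg (s := Finset.univ) fun i _ ↦ hp i
  obtain ⟨hy, hyx, hxy, hγ⟩ := twoLevel_moments_of_purity hD hγ_ge hγ_le hx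
  set y := (1 - x) / (D - 1)
  calc -∑ i, p i * log (p i) = ∑ i, negMulLog (p i) := by
        simp [negMulLog, Finset.sum_neg_distrib]
    _ ≤ negMulLog x + (D - 1) * negMulLog y :=
        sum_negMulLog_le_of_sum_sq hp hy hyx (by rw [hsum, hxy]) (by rw [hsq, hγ])
    _ = -(x * log x) - (1 - x) * log y := by
        simp only [negMulLog]
        linear_combination (-log y) * hxy

end Simplex

theorem Matrix.IsHermitian.trace_mul_self_eq_sum_sq {𝕜 n : Type*} [RCLike 𝕜] [Fintype n]
    [DecidableEq n] {A : Matrix n n 𝕜} (hA : A.IsHermitian) :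
    (A * A).trace = ∑ i, (hA.eigenvalues i : 𝕜) ^ 2 := by
  conv_lhs => rw [hA.spectral_theorem, ← map_mul, Unitary.conjStarAlgAut_apply, trace_mul_cycle,
    Unitary.coe_star_mul_self, one_mul, diagonal_mul_diagonal, trace_diagonal]
  simp [sq]

/-- For a density matrix ρ on a d-dimensional space with purity γ = Tr(ρ²),
`S(ρ) ≤ -x₁ log x₁ - (1-x₁) log((1-x₁)/(d-1))` with `x₁ = 1/d + √((d-1)/d (γ-1/d))`. -/
theorem vonNeumannEntropy_le_of_purity (d : ℕ) (ρ : Matrix (Fin d) (Fin d) ℂ)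
    (hρ : ρ.PosSemidef) (htr : ρ.trace = 1) (γ : ℝ) (hγ : (ρ * ρ).trace = (γ : ℂ)) :
    let x₁ : ℝ := 1 / d + Real.sqrt ((d - 1) / d * (γ - 1 / d))
    vonNeumannEntropy ρ ≤ -(x₁ * Real.log x₁) - (1 - x₁) * Real.log ((1 - x₁) / (d - 1)) := by
  rw [vonNeumannEntropy, dif_pos hρ.isHermitian]
  have hsum : ∑ i, hρ.isHermitian.eigenvalues i = 1 := by
    have := hρ.isHermitian.trace_eq_sum_eigenvalues.symm.trans htr
    simp only [RCLike.ofReal_eq_complex_ofReal] at this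
    exact_mod_cast this
  have hsq : ∑ i, hρ.isHermitian.eigenvalues i ^ 2 = γ := by
    have := hρ.isHermitian.trace_mul_self_eq_sum_sq.symm.trans hγ
    simp only [RCLike.ofReal_eq_complex_ofReal] at this
    exact_mod_cast this
  rcases Nat.lt_or_ge d 2 with hd | hd
  · interval_cases d
    · simp at hsum
    · have h1 : hρ.isHermitian.eigenvalues 0 = 1 := by simpa using hsum
      simp [h1]
  have : Nontrivial (Fin d) := Fin.nontrivial_iff_two_le.2 hd
  intro x₁
  have := neg_sum_mul_log_le_of_purity hρ.eigenvalues_nonneg hsum hsq (x := x₁)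
    (by simp only [x₁, Fintype.card_fin])
  rwa [Fintype.card_fin] at this
end
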